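/- arXiv:1804.03527 — 6 statements merged into one kernel-verified Lean document; each statement's English description precedes it below -/
import Mathlib

section
/- Let C be a symmetric monoidal category whose monoidal unit 𝟙 is terminal, and let P : C ⥤ C be an affine bilax monoidal endofunctor as in the context. Then for all objects X, Y of C, the composite ∇_{X,Y} ≫ Δ_{X,Y} : PX ⊗ PY ⟶ P(X ⊗ Y) ⟶ PX ⊗ PY is the identity; in particular PX ⊗ PY is a retract of P(X ⊗ Y). -/
open CategoryTheory MonoidalCategory CategoryTheory.Limits

/-- An affine bilax monoidal endofunctor on a symmetric monoidal category:
a functor `P` equipped with a lax monoidal structure `(ε, ∇)`, an oplax monoidal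
structure `(η, Δ)`, such that `ε` and `η` are mutually inverse (affineness), and
the bimonoidality equation holds. -/
structure AffineBilax (C : Type*) [Category C] [MonoidalCategory C] [SymmetricCategory C] where
  P : C ⥤ C
  ε : 𝟙_ C ⟶ P.obj (𝟙_ C)
  η : P.obj (𝟙_ C) ⟶ 𝟙_ C
  nabla : ∀ X Y : C, P.obj X ⊗ P.obj Y ⟶ P.obj (X ⊗ Y)
  delta : ∀ X Y : C, P.obj (X ⊗ Y) ⟶ P.obj X ⊗ P.obj Y
  nabla_natural : ∀ {X Y X' Y' : C} (f : X ⟶ X') (g : Y ⟶ Y'),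
    (P.map f ⊗ₘ P.map g) ≫ nabla X' Y' = nabla X Y ≫ P.map (f ⊗ₘ g)
  delta_natural : ∀ {X Y X' Y' : C} (f : X ⟶ X') (g : Y ⟶ Y'),
    P.map (f ⊗ₘ g) ≫ delta X' Y' = delta X Y ≫ (P.map f ⊗ₘ P.map g)
  nabla_assoc : ∀ X Y Z : C,
    (nabla X Y ▷ P.obj Z) ≫ nabla (X ⊗ Y) Z ≫ P.map (α_ X Y Z).hom
      = (α_ (P.obj X) (P.obj Y) (P.obj Z)).hom ≫ (P.obj X ◁ nabla Y Z) ≫ nabla X (Y ⊗ Z)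
  nabla_left_unitality : ∀ X : C,
    (λ_ (P.obj X)).inv ≫ (ε ▷ P.obj X) ≫ nabla (𝟙_ C) X ≫ P.map (λ_ X).hom = 𝟙 (P.obj X)
  nabla_right_unitality : ∀ X : C,
    (ρ_ (P.obj X)).inv ≫ (P.obj X ◁ ε) ≫ nabla X (𝟙_ C) ≫ P.map (ρ_ X).hom = 𝟙 (P.obj X)
  delta_coassoc : ∀ X Y Z : C,
    P.map (α_ X Y Z).hom ≫ delta X (Y ⊗ Z) ≫ (P.obj X ◁ delta Y Z)
      = delta (X ⊗ Y) Z ≫ (delta X Y ▷ P.obj Z) ≫ (α_ (P.obj X) (P.obj Y) (P.obj Z)).hom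
  delta_left_counitality : ∀ X : C,
    P.map (λ_ X).inv ≫ delta (𝟙_ C) X ≫ (η ▷ P.obj X) ≫ (λ_ (P.obj X)).hom = 𝟙 (P.obj X)
  delta_right_counitality : ∀ X : C,
    P.map (ρ_ X).inv ≫ delta X (𝟙_ C) ≫ (P.obj X ◁ η) ≫ (ρ_ (P.obj X)).hom = 𝟙 (P.obj X)
  affine₁ : ε ≫ η = 𝟙 (𝟙_ C)
  affine₂ : η ≫ ε = 𝟙 (P.obj (𝟙_ C))
  bimonoidal : ∀ W X Y Z : C,
    nabla (W ⊗ X) (Y ⊗ Z) ≫ P.map (tensorμ W X Y Z) ≫ delta (W ⊗ Y) (X ⊗ Z)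
      = (delta W X ⊗ₘ delta Y Z) ≫ tensorμ (P.obj W) (P.obj X) (P.obj Y) (P.obj Z)
          ≫ (nabla W Y ⊗ₘ nabla X Z)

private lemma nabla_delta_aux_mid {C : Type*} [Category C] [MonoidalCategory C]
    [SymmetricCategory C] (A B E : C) (e : 𝟙_ C ⟶ E) (h : E ⟶ 𝟙_ C)
    (he : e ≫ h = 𝟙 (𝟙_ C)) :
    ((ρ_ A).inv ≫ (A ◁ e) ⊗ₘ (λ_ B).inv ≫ (e ▷ B)) ≫ tensorμ A E E B
      ≫ ((A ◁ h) ≫ (ρ_ A).hom ⊗ₘ (h ▷ B) ≫ (λ_ B).hom) = 𝟙 (A ⊗ B) := by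
  have keyP : tensorμ A (𝟙_ C) (𝟙_ C) B
      = ((ρ_ A).hom ⊗ₘ (λ_ B).hom) ≫ ((ρ_ A).inv ⊗ₘ (λ_ B).inv) := by
    rw [tensorμ, braiding_tensorUnit_left]; monoidal
  rw [← tensorHom_comp_tensorHom, ← tensorHom_comp_tensorHom]
  simp only [Category.assoc]
  rw [← id_tensorHom, ← tensorHom_id, tensorμ_natural_assoc]
  rw [keyP]
  simp only [Category.assoc]
  simp only [← id_tensorHom, ← tensorHom_id]
  simp only [tensorHom_comp_tensorHom_assoc, tensorHom_comp_tensorHom]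
  simp [he]

/-- If the monoidal unit is terminal and `P` is an affine bilax monoidal endofunctor,
then `∇ ≫ Δ` is the identity of `PX ⊗ PY`; in particular `PX ⊗ PY` is a retract of
`P(X ⊗ Y)`. -/
theorem nabla_delta_eq_id {C : Type*} [Category C] [MonoidalCategory C] [SymmetricCategory C]
    (hT : IsTerminal (𝟙_ C)) (B : AffineBilax C) (X Y : C) :
    B.nabla X Y ≫ B.delta X Y = 𝟙 (B.P.obj X ⊗ B.P.obj Y) := by
  haveI : IsIso B.ε := ⟨B.η, B.affine₁, B.affine₂⟩
  haveI : IsIso B.η := ⟨B.ε, B.affine₂, B.affine₁⟩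
  -- coherence computations for tensorμ with unit slots
  have key : tensorμ X (𝟙_ C) (𝟙_ C) Y
      = ((ρ_ X).hom ⊗ₘ (λ_ Y).hom) ≫ ((ρ_ X).inv ⊗ₘ (λ_ Y).inv) := by
    rw [tensorμ, braiding_tensorUnit_left]; monoidal
  have keyP : tensorμ (B.P.obj X) (𝟙_ C) (𝟙_ C) (B.P.obj Y)
      = ((ρ_ (B.P.obj X)).hom ⊗ₘ (λ_ (B.P.obj Y)).hom)
        ≫ ((ρ_ (B.P.obj X)).inv ⊗ₘ (λ_ (B.P.obj Y)).inv) := by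
    rw [tensorμ, braiding_tensorUnit_left]; monoidal
  -- formulas for nabla/delta with a unit argument
  have nX : B.nabla X (𝟙_ C)
      = (B.P.obj X ◁ B.η) ≫ (ρ_ (B.P.obj X)).hom ≫ B.P.map (ρ_ X).inv := by
    have h2 : B.nabla X (𝟙_ C) ≫ B.P.map (ρ_ X).hom
        = (B.P.obj X ◁ B.η) ≫ (ρ_ (B.P.obj X)).hom := by
      rw [← cancel_epi (B.P.obj X ◁ B.ε)]
      rw [← MonoidalCategory.whiskerLeft_comp_assoc, B.affine₁,
        MonoidalCategory.whiskerLeft_id, Category.id_comp]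
      rw [← cancel_epi (ρ_ (B.P.obj X)).inv]
      simpa using B.nabla_right_unitality X
    rw [← cancel_mono (B.P.map (ρ_ X).hom)]
    simp [h2, ← B.P.map_comp]
  have nY : B.nabla (𝟙_ C) Y
      = (B.η ▷ B.P.obj Y) ≫ (λ_ (B.P.obj Y)).hom ≫ B.P.map (λ_ Y).inv := by
    have h2 : B.nabla (𝟙_ C) Y ≫ B.P.map (λ_ Y).hom
        = (B.η ▷ B.P.obj Y) ≫ (λ_ (B.P.obj Y)).hom := by
      rw [← cancel_epi (B.ε ▷ B.P.obj Y)]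
      rw [← comp_whiskerRight_assoc, B.affine₁, id_whiskerRight, Category.id_comp]
      rw [← cancel_epi (λ_ (B.P.obj Y)).inv]
      simpa using B.nabla_left_unitality Y
    rw [← cancel_mono (B.P.map (λ_ Y).hom)]
    simp [h2, ← B.P.map_comp]
  have dX : B.delta X (𝟙_ C)
      = B.P.map (ρ_ X).hom ≫ (ρ_ (B.P.obj X)).inv ≫ (B.P.obj X ◁ B.ε) := by
    have h2 : B.delta X (𝟙_ C) ≫ (B.P.obj X ◁ B.η)
        = B.P.map (ρ_ X).hom ≫ (ρ_ (B.P.obj X)).inv := by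
      rw [← cancel_mono (ρ_ (B.P.obj X)).hom]
      rw [← cancel_epi (B.P.map (ρ_ X).inv)]
      simpa using B.delta_right_counitality X
    rw [← cancel_mono (B.P.obj X ◁ B.η)]
    simp only [Category.assoc, ← MonoidalCategory.whiskerLeft_comp, B.affine₁,
      MonoidalCategory.whiskerLeft_id, Category.comp_id]
    exact h2
  have dY : B.delta (𝟙_ C) Y
      = B.P.map (λ_ Y).hom ≫ (λ_ (B.P.obj Y)).inv ≫ (B.ε ▷ B.P.obj Y) := by
    have h2 : B.delta (𝟙_ C) Y ≫ (B.η ▷ B.P.obj Y)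
        = B.P.map (λ_ Y).hom ≫ (λ_ (B.P.obj Y)).inv := by
      rw [← cancel_mono (λ_ (B.P.obj Y)).hom]
      rw [← cancel_epi (B.P.map (λ_ Y).inv)]
      simpa using B.delta_left_counitality Y
    rw [← cancel_mono (B.η ▷ B.P.obj Y)]
    simp only [Category.assoc, ← comp_whiskerRight, B.affine₁, id_whiskerRight, Category.comp_id]
    exact h2
  have h := B.bimonoidal X (𝟙_ C) (𝟙_ C) Y
  have hn := B.nabla_natural (ρ_ X).hom (λ_ Y).hom
  have hd := B.delta_natural (ρ_ X).inv (λ_ Y).inv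
  -- rewrite the left-hand side of bimonoidality
  have hL : B.nabla (X ⊗ 𝟙_ C) (𝟙_ C ⊗ Y) ≫ B.P.map (tensorμ X (𝟙_ C) (𝟙_ C) Y)
        ≫ B.delta (X ⊗ 𝟙_ C) (𝟙_ C ⊗ Y)
      = (B.P.map (ρ_ X).hom ⊗ₘ B.P.map (λ_ Y).hom) ≫ B.nabla X Y ≫ B.delta X Y
        ≫ (B.P.map (ρ_ X).inv ⊗ₘ B.P.map (λ_ Y).inv) := by
    rw [key, B.P.map_comp]
    simp only [Category.assoc]
    rw [hd]
    rw [← Category.assoc, ← hn]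
    simp only [Category.assoc]
  -- rewrite the right-hand side of bimonoidality
  have hR : (B.delta X (𝟙_ C) ⊗ₘ B.delta (𝟙_ C) Y)
        ≫ tensorμ (B.P.obj X) (B.P.obj (𝟙_ C)) (B.P.obj (𝟙_ C)) (B.P.obj Y)
        ≫ (B.nabla X (𝟙_ C) ⊗ₘ B.nabla (𝟙_ C) Y)
      = (B.P.map (ρ_ X).hom ⊗ₘ B.P.map (λ_ Y).hom)
        ≫ (B.P.map (ρ_ X).inv ⊗ₘ B.P.map (λ_ Y).inv) := by
    rw [nX, nY, dX, dY]
    have hmid : ((ρ_ (B.P.obj X)).inv ≫ (B.P.obj X ◁ B.ε)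
          ⊗ₘ (λ_ (B.P.obj Y)).inv ≫ (B.ε ▷ B.P.obj Y))
        ≫ tensorμ (B.P.obj X) (B.P.obj (𝟙_ C)) (B.P.obj (𝟙_ C)) (B.P.obj Y)
        ≫ ((B.P.obj X ◁ B.η) ≫ (ρ_ (B.P.obj X)).hom
          ⊗ₘ (B.η ▷ B.P.obj Y) ≫ (λ_ (B.P.obj Y)).hom)
        = 𝟙 (B.P.obj X ⊗ B.P.obj Y) := by
      exact nabla_delta_aux_mid _ _ _ B.ε B.η B.affine₁
    calc (B.P.map (ρ_ X).hom ≫ (ρ_ (B.P.obj X)).inv ≫ (B.P.obj X ◁ B.ε)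
          ⊗ₘ B.P.map (λ_ Y).hom ≫ (λ_ (B.P.obj Y)).inv ≫ (B.ε ▷ B.P.obj Y))
        ≫ tensorμ (B.P.obj X) (B.P.obj (𝟙_ C)) (B.P.obj (𝟙_ C)) (B.P.obj Y)
        ≫ ((B.P.obj X ◁ B.η) ≫ (ρ_ (B.P.obj X)).hom ≫ B.P.map (ρ_ X).inv
          ⊗ₘ (B.η ▷ B.P.obj Y) ≫ (λ_ (B.P.obj Y)).hom ≫ B.P.map (λ_ Y).inv)
        = (B.P.map (ρ_ X).hom ⊗ₘ B.P.map (λ_ Y).hom)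
          ≫ (((ρ_ (B.P.obj X)).inv ≫ (B.P.obj X ◁ B.ε)
              ⊗ₘ (λ_ (B.P.obj Y)).inv ≫ (B.ε ▷ B.P.obj Y))
            ≫ tensorμ (B.P.obj X) (B.P.obj (𝟙_ C)) (B.P.obj (𝟙_ C)) (B.P.obj Y)
            ≫ ((B.P.obj X ◁ B.η) ≫ (ρ_ (B.P.obj X)).hom
              ⊗ₘ (B.η ▷ B.P.obj Y) ≫ (λ_ (B.P.obj Y)).hom))
          ≫ (B.P.map (ρ_ X).inv ⊗ₘ B.P.map (λ_ Y).inv) := by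
            simp only [← tensorHom_comp_tensorHom, Category.assoc]
      _ = (B.P.map (ρ_ X).hom ⊗ₘ B.P.map (λ_ Y).hom)
          ≫ (B.P.map (ρ_ X).inv ⊗ₘ B.P.map (λ_ Y).inv) := by rw [hmid]; simp
  have hfin := hL.symm.trans (h.trans hR)
  rw [cancel_epi] at hfin
  rw [← cancel_mono (B.P.map (ρ_ X).inv ⊗ₘ B.P.map (λ_ Y).inv)]
  simpa using hfin
end

section
/- Let C be a symmetric monoidal category whose monoidal unit 𝟙 is terminal, and let P : C ⥤ C be an affine bilax monoidal endofunctor as in the context. Let r : 𝟙 ⟶ P(W ⊗ X) and s : 𝟙 ⟶ P(Y ⊗ Z), and let t : 𝟙 ⟶ P((W⊗X)⊗(Y⊗Z)) be the composite of the inverse left unitor 𝟙 ≅ 𝟙 ⊗ 𝟙, then r ⊗ s, then ∇_{W⊗X,Y⊗Z}. Then the marginal of t on W ⊗ Y, namely t ≫ P applied to the morphism (W⊗X)⊗(Y⊗Z) ⟶ W ⊗ Y given by (id_W ⊗ !_X) ⊗ (id_Y ⊗ !_Z) followed by the unitor isomorphisms (where ! denotes the unique morphism to the terminal unit), makes W and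 Y independent; likewise, the marginal of t on X ⊗ Z makes X and Z independent. -/
open CategoryTheory MonoidalCategory CategoryTheory.Limits

variable {C : Type*} [Category C] [MonoidalCategory C] [SymmetricCategory C]

/-- A law `r : 𝟙 ⟶ P(X ⊗ Y)` makes `X` and `Y` independent if `r ≫ Δ ≫ ∇ = r`. -/
def AffineBilax.Independent (B : AffineBilax C) {X Y : C}
    (r : 𝟙_ C ⟶ B.P.obj (X ⊗ Y)) : Prop :=
  r ≫ B.delta X Y ≫ B.nabla X Y = r


section Aux

variable {C : Type*} [Category C] [MonoidalCategory C] [SymmetricCategory C]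

lemma braid_unit' : (β_ (𝟙_ C) (𝟙_ C)).hom = 𝟙 _ := by
  rw [braiding_tensorUnit_left, MonoidalCategory.unitors_equal]; simp

lemma tensorμ_of_braid_id {M : C} (h : (β_ M M).hom = 𝟙 _) (A B : C) :
    tensorμ A M M B = 𝟙 _ := by
  rw [tensorμ, h]; simp

lemma AffineBilax.braid_PUnit (B : AffineBilax C) :
    (β_ (B.P.obj (𝟙_ C)) (B.P.obj (𝟙_ C))).hom = 𝟙 _ := by
  have h := BraidedCategory.braiding_naturality B.η B.η
  rw [braid_unit', Category.comp_id] at h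
  calc (β_ (B.P.obj (𝟙_ C)) (B.P.obj (𝟙_ C))).hom
      = (β_ _ _).hom ≫ (B.η ⊗ₘ B.η) ≫ (B.ε ⊗ₘ B.ε) := by
        rw [tensorHom_comp_tensorHom, B.affine₂, id_tensorHom_id, Category.comp_id]
    _ = (B.η ⊗ₘ B.η) ≫ (B.ε ⊗ₘ B.ε) := by rw [← Category.assoc, ← h]
    _ = 𝟙 _ := by rw [tensorHom_comp_tensorHom, B.affine₂, id_tensorHom_id]

lemma AffineBilax.delta_nabla_right (B : AffineBilax C) (A : C) :
    B.delta A (𝟙_ C) ≫ B.nabla A (𝟙_ C) ≫ B.P.map (ρ_ A).hom = B.P.map (ρ_ A).hom := by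
  have h1 : (B.P.obj A ◁ B.ε) ≫ B.nabla A (𝟙_ C) ≫ B.P.map (ρ_ A).hom
      = (ρ_ (B.P.obj A)).hom := by
    have := B.nabla_right_unitality A
    calc (B.P.obj A ◁ B.ε) ≫ B.nabla A (𝟙_ C) ≫ B.P.map (ρ_ A).hom
        = (ρ_ (B.P.obj A)).hom ≫ ((ρ_ (B.P.obj A)).inv ≫ (B.P.obj A ◁ B.ε)
            ≫ B.nabla A (𝟙_ C) ≫ B.P.map (ρ_ A).hom) := by simp
      _ = (ρ_ (B.P.obj A)).hom := by rw [this, Category.comp_id]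
  have h2 : B.delta A (𝟙_ C) ≫ (B.P.obj A ◁ B.η)
      = B.P.map (ρ_ A).hom ≫ (ρ_ (B.P.obj A)).inv := by
    have := B.delta_right_counitality A
    have h3 : B.P.map (ρ_ A).inv ≫ B.delta A (𝟙_ C) ≫ (B.P.obj A ◁ B.η)
        = (ρ_ (B.P.obj A)).inv := by
      calc B.P.map (ρ_ A).inv ≫ B.delta A (𝟙_ C) ≫ (B.P.obj A ◁ B.η)
          = (B.P.map (ρ_ A).inv ≫ B.delta A (𝟙_ C) ≫ (B.P.obj A ◁ B.η)
              ≫ (ρ_ (B.P.obj A)).hom) ≫ (ρ_ (B.P.obj A)).inv := by simp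
        _ = (ρ_ (B.P.obj A)).inv := by rw [this, Category.id_comp]
    calc B.delta A (𝟙_ C) ≫ (B.P.obj A ◁ B.η)
        = B.P.map (ρ_ A).hom ≫ (B.P.map (ρ_ A).inv ≫ B.delta A (𝟙_ C)
            ≫ (B.P.obj A ◁ B.η)) := by
          rw [← Category.assoc, ← Category.assoc, ← B.P.map_comp]; simp
      _ = B.P.map (ρ_ A).hom ≫ (ρ_ (B.P.obj A)).inv := by rw [h3]
  calc B.delta A (𝟙_ C) ≫ B.nabla A (𝟙_ C) ≫ B.P.map (ρ_ A).hom
      = B.delta A (𝟙_ C) ≫ (B.P.obj A ◁ B.η) ≫ (B.P.obj A ◁ B.ε)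
          ≫ B.nabla A (𝟙_ C) ≫ B.P.map (ρ_ A).hom := by
        rw [← Category.assoc (_ ◁ B.η), ← MonoidalCategory.whiskerLeft_comp,
          B.affine₂, MonoidalCategory.whiskerLeft_id, Category.id_comp]
    _ = B.P.map (ρ_ A).hom := by
        rw [← Category.assoc, h2, Category.assoc, h1]; simp

lemma AffineBilax.delta_nabla_left (B : AffineBilax C) (A : C) :
    B.delta (𝟙_ C) A ≫ B.nabla (𝟙_ C) A ≫ B.P.map (λ_ A).hom = B.P.map (λ_ A).hom := by
  have h1 : (B.ε ▷ B.P.obj A) ≫ B.nabla (𝟙_ C) A ≫ B.P.map (λ_ A).hom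
      = (λ_ (B.P.obj A)).hom := by
    have := B.nabla_left_unitality A
    calc (B.ε ▷ B.P.obj A) ≫ B.nabla (𝟙_ C) A ≫ B.P.map (λ_ A).hom
        = (λ_ (B.P.obj A)).hom ≫ ((λ_ (B.P.obj A)).inv ≫ (B.ε ▷ B.P.obj A)
            ≫ B.nabla (𝟙_ C) A ≫ B.P.map (λ_ A).hom) := by simp
      _ = (λ_ (B.P.obj A)).hom := by rw [this, Category.comp_id]
  have h2 : B.delta (𝟙_ C) A ≫ (B.η ▷ B.P.obj A)
      = B.P.map (λ_ A).hom ≫ (λ_ (B.P.obj A)).inv := by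
    have := B.delta_left_counitality A
    have h3 : B.P.map (λ_ A).inv ≫ B.delta (𝟙_ C) A ≫ (B.η ▷ B.P.obj A)
        = (λ_ (B.P.obj A)).inv := by
      calc B.P.map (λ_ A).inv ≫ B.delta (𝟙_ C) A ≫ (B.η ▷ B.P.obj A)
          = (B.P.map (λ_ A).inv ≫ B.delta (𝟙_ C) A ≫ (B.η ▷ B.P.obj A)
              ≫ (λ_ (B.P.obj A)).hom) ≫ (λ_ (B.P.obj A)).inv := by simp
        _ = (λ_ (B.P.obj A)).inv := by rw [this, Category.id_comp]
    calc B.delta (𝟙_ C) A ≫ (B.η ▷ B.P.obj A)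
        = B.P.map (λ_ A).hom ≫ (B.P.map (λ_ A).inv ≫ B.delta (𝟙_ C) A
            ≫ (B.η ▷ B.P.obj A)) := by
          rw [← Category.assoc, ← Category.assoc, ← B.P.map_comp]; simp
      _ = B.P.map (λ_ A).hom ≫ (λ_ (B.P.obj A)).inv := by rw [h3]
  calc B.delta (𝟙_ C) A ≫ B.nabla (𝟙_ C) A ≫ B.P.map (λ_ A).hom
      = B.delta (𝟙_ C) A ≫ (B.η ▷ B.P.obj A) ≫ (B.ε ▷ B.P.obj A)
          ≫ B.nabla (𝟙_ C) A ≫ B.P.map (λ_ A).hom := by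
        rw [← Category.assoc (B.η ▷ _), ← MonoidalCategory.comp_whiskerRight,
          B.affine₂, MonoidalCategory.id_whiskerRight, Category.id_comp]
    _ = B.P.map (λ_ A).hom := by
        rw [← Category.assoc, h2, Category.assoc, h1]; simp

/-- The key fact: for an affine bilax functor, `∇ ≫ Δ = 𝟙`. -/
lemma AffineBilax.nabla_delta (B : AffineBilax C) (A A' : C) :
    B.nabla A A' ≫ B.delta A A' = 𝟙 _ := by
  have bim := B.bimonoidal A (𝟙_ C) (𝟙_ C) A'
  rw [tensorμ_of_braid_id braid_unit', tensorμ_of_braid_id B.braid_PUnit,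
    B.P.map_id, Category.id_comp, Category.id_comp] at bim
  -- conjugate by the unitor isos
  have h1 := B.nabla_natural (ρ_ A).hom (λ_ A').hom
  have key : (B.P.map (ρ_ A).hom ⊗ₘ B.P.map (λ_ A').hom) ≫ B.nabla A A' ≫ B.delta A A'
      = (B.P.map (ρ_ A).hom ⊗ₘ B.P.map (λ_ A').hom) := by
    calc (B.P.map (ρ_ A).hom ⊗ₘ B.P.map (λ_ A').hom) ≫ B.nabla A A' ≫ B.delta A A'
        = (B.nabla (A ⊗ 𝟙_ C) (𝟙_ C ⊗ A') ≫ B.P.map ((ρ_ A).hom ⊗ₘ (λ_ A').hom))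
            ≫ B.delta A A' := by rw [← Category.assoc, h1]
      _ = B.nabla (A ⊗ 𝟙_ C) (𝟙_ C ⊗ A') ≫ B.delta (A ⊗ 𝟙_ C) (𝟙_ C ⊗ A')
            ≫ (B.P.map (ρ_ A).hom ⊗ₘ B.P.map (λ_ A').hom) := by
          rw [Category.assoc, B.delta_natural (ρ_ A).hom (λ_ A').hom]
      _ = (B.delta A (𝟙_ C) ⊗ₘ B.delta (𝟙_ C) A')
            ≫ (B.nabla A (𝟙_ C) ⊗ₘ B.nabla (𝟙_ C) A')
            ≫ (B.P.map (ρ_ A).hom ⊗ₘ B.P.map (λ_ A').hom) := by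
          rw [← Category.assoc, bim, Category.assoc]
      _ = (B.delta A (𝟙_ C) ≫ B.nabla A (𝟙_ C) ≫ B.P.map (ρ_ A).hom)
            ⊗ₘ (B.delta (𝟙_ C) A' ≫ B.nabla (𝟙_ C) A' ≫ B.P.map (λ_ A').hom) := by
          rw [tensorHom_comp_tensorHom, tensorHom_comp_tensorHom]
      _ = (B.P.map (ρ_ A).hom ⊗ₘ B.P.map (λ_ A').hom) := by
          rw [B.delta_nabla_right, B.delta_nabla_left]
  haveI : IsIso (B.P.map (ρ_ A).hom) := inferInstance
  haveI : IsIso (B.P.map (λ_ A').hom) := inferInstance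
  haveI : IsIso (B.P.map (ρ_ A).hom ⊗ₘ B.P.map (λ_ A').hom) := by infer_instance
  calc B.nabla A A' ≫ B.delta A A'
      = inv (B.P.map (ρ_ A).hom ⊗ₘ B.P.map (λ_ A').hom)
          ≫ ((B.P.map (ρ_ A).hom ⊗ₘ B.P.map (λ_ A').hom)
            ≫ B.nabla A A' ≫ B.delta A A') := by simp
    _ = inv (B.P.map (ρ_ A).hom ⊗ₘ B.P.map (λ_ A').hom)
          ≫ (B.P.map (ρ_ A).hom ⊗ₘ B.P.map (λ_ A').hom) := by rw [key]
    _ = 𝟙 _ := by simp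

lemma AffineBilax.independent_of_factor (B : AffineBilax C) {A A' : C}
    (u : 𝟙_ C ⟶ B.P.obj A ⊗ B.P.obj A') : B.Independent (u ≫ B.nabla A A') := by
  unfold AffineBilax.Independent
  rw [Category.assoc, ← Category.assoc (B.nabla A A'), B.nabla_delta, Category.id_comp]

end Aux

set_option maxHeartbeats 1000000 in
/-- Given laws `r` on `W ⊗ X` and `s` on `Y ⊗ Z`, in their product law
`t = λ⁻¹ ≫ (r ⊗ s) ≫ ∇` the components `W` and `Y` are independent after forgetting
`X` and `Z`, and likewise `X` and `Z` are independent after forgetting `W` and `Y`. -/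
theorem product_marginals_independent (hT : IsTerminal (𝟙_ C)) (B : AffineBilax C)
    {W X Y Z : C} (r : 𝟙_ C ⟶ B.P.obj (W ⊗ X)) (s : 𝟙_ C ⟶ B.P.obj (Y ⊗ Z)) :
    letI t : 𝟙_ C ⟶ B.P.obj ((W ⊗ X) ⊗ (Y ⊗ Z)) :=
      (λ_ (𝟙_ C)).inv ≫ (r ⊗ₘ s) ≫ B.nabla (W ⊗ X) (Y ⊗ Z)
    B.Independent (t ≫ B.P.map
        (((𝟙 W ⊗ₘ hT.from X) ⊗ₘ (𝟙 Y ⊗ₘ hT.from Z)) ≫ ((ρ_ W).hom ⊗ₘ (ρ_ Y).hom))) ∧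
    B.Independent (t ≫ B.P.map
        (((hT.from W ⊗ₘ 𝟙 X) ⊗ₘ (hT.from Y ⊗ₘ 𝟙 Z)) ≫ ((λ_ X).hom ⊗ₘ (λ_ Z).hom))) := by
  have e1 : ((𝟙 W ⊗ₘ hT.from X) ⊗ₘ (𝟙 Y ⊗ₘ hT.from Z)) ≫ ((ρ_ W).hom ⊗ₘ (ρ_ Y).hom)
      = ((𝟙 W ⊗ₘ hT.from X) ≫ (ρ_ W).hom) ⊗ₘ ((𝟙 Y ⊗ₘ hT.from Z) ≫ (ρ_ Y).hom) := by
    rw [tensorHom_comp_tensorHom]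
  have e2 : ((hT.from W ⊗ₘ 𝟙 X) ⊗ₘ (hT.from Y ⊗ₘ 𝟙 Z)) ≫ ((λ_ X).hom ⊗ₘ (λ_ Z).hom)
      = ((hT.from W ⊗ₘ 𝟙 X) ≫ (λ_ X).hom) ⊗ₘ ((hT.from Y ⊗ₘ 𝟙 Z) ≫ (λ_ Z).hom) := by
    rw [tensorHom_comp_tensorHom]
  constructor
  · have h := B.nabla_natural ((𝟙 W ⊗ₘ hT.from X) ≫ (ρ_ W).hom)
      ((𝟙 Y ⊗ₘ hT.from Z) ≫ (ρ_ Y).hom)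
    have : ((λ_ (𝟙_ C)).inv ≫ (r ⊗ₘ s) ≫ B.nabla (W ⊗ X) (Y ⊗ Z)) ≫ B.P.map
          (((𝟙 W ⊗ₘ hT.from X) ⊗ₘ (𝟙 Y ⊗ₘ hT.from Z)) ≫ ((ρ_ W).hom ⊗ₘ (ρ_ Y).hom))
        = ((λ_ (𝟙_ C)).inv ≫ (r ⊗ₘ s)
            ≫ (B.P.map ((𝟙 W ⊗ₘ hT.from X) ≫ (ρ_ W).hom)
              ⊗ₘ B.P.map ((𝟙 Y ⊗ₘ hT.from Z) ≫ (ρ_ Y).hom))) ≫ B.nabla W Y := by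
      rw [e1]
      simp only [Category.assoc]
      rw [← h]
    rw [this]
    exact B.independent_of_factor _
  · have h := B.nabla_natural ((hT.from W ⊗ₘ 𝟙 X) ≫ (λ_ X).hom)
      ((hT.from Y ⊗ₘ 𝟙 Z) ≫ (λ_ Z).hom)
    have : ((λ_ (𝟙_ C)).inv ≫ (r ⊗ₘ s) ≫ B.nabla (W ⊗ X) (Y ⊗ Z)) ≫ B.P.map
          (((hT.from W ⊗ₘ 𝟙 X) ⊗ₘ (hT.from Y ⊗ₘ 𝟙 Z)) ≫ ((λ_ X).hom ⊗ₘ (λ_ Z).hom))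
        = ((λ_ (𝟙_ C)).inv ≫ (r ⊗ₘ s)
            ≫ (B.P.map ((hT.from W ⊗ₘ 𝟙 X) ≫ (λ_ X).hom)
              ⊗ₘ B.P.map ((hT.from Y ⊗ₘ 𝟙 Z) ≫ (λ_ Z).hom))) ≫ B.nabla X Z := by
      rw [e2]
      simp only [Category.assoc]
      rw [← h]
    rw [this]
    exact B.independent_of_factor _
end

section
/- Let C be a cartesian monoidal category and let P : C ⥤ C be a functor equipped with a lax monoidal structure with unit ε : 𝟙 ⟶ P𝟙 and multiplication ∇_{X,Y} : PX ⊗ PY ⟶ P(X ⊗ Y), such that ε is an isomorphism (P is affine). Define Δ_{X,Y} := ⟨P(fst_{X,Y}), P(snd_{X,Y})⟩. Let s : 𝟙 ⟶ P A, f₁ : A ⟶ B₁, f₂ : A ⟶ B₂ be morphisms of C, and set r₁ := s ≫ P(f₁) and r₂ := s ≫ P(f₂). Then the following are equivalent: (i) there exists h : A ⟶ B₁ ⊗ B₂ with h ≫ fst = f₁, h ≫ snd = f₂, and s ≫ P(h) equal to the product law λ⁻¹ ≫ (r₁ ⊗ r₂) ≫ ∇_{B₁,B₂} : 𝟙 ⟶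 P(B₁ ⊗ B₂) (independence in the sense of Franz); (ii) the law t := s ≫ P(⟨f₁, f₂⟩) satisfies t ≫ Δ_{B₁,B₂} ≫ ∇_{B₁,B₂} = t (independence in the sense of the bimonoidal structure). -/
open CategoryTheory MonoidalCategory CategoryTheory.Limits CategoryTheory.CartesianMonoidalCategory

/-- In a cartesian monoidal category with an affine lax monoidal endofunctor `P`
(with `Δ = ⟨P(fst), P(snd)⟩`), independence of `f₁ : A ⟶ B₁` and `f₂ : A ⟶ B₂`
with respect to a law `s : 𝟙 ⟶ P A` in the sense of Franz is equivalent to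
independence of `B₁` and `B₂` for the law `s ≫ P⟨f₁,f₂⟩` in the sense of the
bimonoidal structure. -/
theorem franz_independence_iff {C : Type*} [Category C] [CartesianMonoidalCategory C]
    (P : C ⥤ C)
    (ε : 𝟙_ C ⟶ P.obj (𝟙_ C)) (hε : IsIso ε)
    (nabla : ∀ X Y : C, P.obj X ⊗ P.obj Y ⟶ P.obj (X ⊗ Y))
    (nabla_natural : ∀ {X Y X' Y' : C} (f : X ⟶ X') (g : Y ⟶ Y'),
      (P.map f ⊗ₘ P.map g) ≫ nabla X' Y' = nabla X Y ≫ P.map (f ⊗ₘ g))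
    (nabla_assoc : ∀ X Y Z : C,
      (nabla X Y ▷ P.obj Z) ≫ nabla (X ⊗ Y) Z ≫ P.map (α_ X Y Z).hom
        = (α_ (P.obj X) (P.obj Y) (P.obj Z)).hom ≫ (P.obj X ◁ nabla Y Z) ≫ nabla X (Y ⊗ Z))
    (nabla_left_unitality : ∀ X : C,
      (λ_ (P.obj X)).inv ≫ (ε ▷ P.obj X) ≫ nabla (𝟙_ C) X ≫ P.map (λ_ X).hom = 𝟙 (P.obj X))
    (nabla_right_unitality : ∀ X : C,
      (ρ_ (P.obj X)).inv ≫ (P.obj X ◁ ε) ≫ nabla X (𝟙_ C) ≫ P.map (ρ_ X).hom = 𝟙 (P.obj X))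
    {A B₁ B₂ : C} (s : 𝟙_ C ⟶ P.obj A) (f₁ : A ⟶ B₁) (f₂ : A ⟶ B₂) :
    letI delta : ∀ X Y : C, P.obj (X ⊗ Y) ⟶ P.obj X ⊗ P.obj Y :=
      fun X Y => lift (P.map (fst X Y)) (P.map (snd X Y))
    letI r₁ : 𝟙_ C ⟶ P.obj B₁ := s ≫ P.map f₁
    letI r₂ : 𝟙_ C ⟶ P.obj B₂ := s ≫ P.map f₂
    letI t : 𝟙_ C ⟶ P.obj (B₁ ⊗ B₂) := s ≫ P.map (lift f₁ f₂)
    ((∃ h : A ⟶ B₁ ⊗ B₂, h ≫ fst B₁ B₂ = f₁ ∧ h ≫ snd B₁ B₂ = f₂ ∧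
        s ≫ P.map h = (λ_ (𝟙_ C)).inv ≫ (r₁ ⊗ₘ r₂) ≫ nabla B₁ B₂)
      ↔ t ≫ delta B₁ B₂ ≫ nabla B₁ B₂ = t) := by
  simp only []
  have hlu : (λ_ (𝟙_ C)).inv ≫ fst (𝟙_ C) (𝟙_ C) = 𝟙 (𝟙_ C) := toUnit_unique _ _
  have hru : (λ_ (𝟙_ C)).inv ≫ snd (𝟙_ C) (𝟙_ C) = 𝟙 (𝟙_ C) := toUnit_unique _ _
  have key : (λ_ (𝟙_ C)).inv ≫ ((s ≫ P.map f₁) ⊗ₘ (s ≫ P.map f₂))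
      = lift (s ≫ P.map f₁) (s ≫ P.map f₂) := by
    apply CartesianMonoidalCategory.hom_ext
    · rw [Category.assoc, tensorHom_fst, lift_fst, ← Category.assoc, hlu, Category.id_comp]
    · rw [Category.assoc, tensorHom_snd, lift_snd, ← Category.assoc, hru, Category.id_comp]
  have hdelta : (s ≫ P.map (lift f₁ f₂)) ≫ lift (P.map (fst B₁ B₂)) (P.map (snd B₁ B₂))
      = lift (s ≫ P.map f₁) (s ≫ P.map f₂) := by
    apply CartesianMonoidalCategory.hom_ext <;> simp [← P.map_comp]
  constructor
  · rintro ⟨h, h1, h2, h3⟩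
    have hh : h = lift f₁ f₂ := by apply CartesianMonoidalCategory.hom_ext <;> simp [h1, h2]
    rw [← Category.assoc, hdelta, ← key, Category.assoc, ← h3, hh]
  · intro ht
    refine ⟨lift f₁ f₂, by simp, by simp, ?_⟩
    rw [← Category.assoc, key, ← hdelta, Category.assoc]
    simpa using ht.symm
end

section
/- Let C be a symmetric monoidal category whose monoidal unit 𝟙 is terminal, and let P : C ⥤ C be an affine bilax monoidal endofunctor as in the context, such that moreover ∇ and Δ are braided: ∇_{X,Y} ≫ P(β_{X,Y}) = β_{PX,PY} ≫ ∇_{Y,X} and Δ_{X,Y} ≫ β_{PX,PY} = P(β_{X,Y}) ≫ Δ_{Y,X}, where β denotes the braiding. If a law r : 𝟙 ⟶ P(X ⊗ Y) makes X and Y independent, then the law r ≫ P(β_{X,Y}) : 𝟙 ⟶ P(Y ⊗ X) makes Y and X independent. -/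
open CategoryTheory MonoidalCategory CategoryTheory.Limits

variable {C : Type*} [Category C] [MonoidalCategory C] [SymmetricCategory C]

/-- If `∇` and `Δ` are braided and a law `r : 𝟙 ⟶ P(X ⊗ Y)` makes `X` and `Y`
independent, then the law `r ≫ P(β)` makes `Y` and `X` independent. -/
theorem independent_braiding (hT : IsTerminal (𝟙_ C)) (B : AffineBilax C)
    (nabla_braided : ∀ X Y : C,
      B.nabla X Y ≫ B.P.map (β_ X Y).hom = (β_ (B.P.obj X) (B.P.obj Y)).hom ≫ B.nabla Y X)
    (delta_braided : ∀ X Y : C,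
      B.delta X Y ≫ (β_ (B.P.obj X) (B.P.obj Y)).hom = B.P.map (β_ X Y).hom ≫ B.delta Y X)
    {X Y : C} (r : 𝟙_ C ⟶ B.P.obj (X ⊗ Y)) (hr : B.Independent r) :
    B.Independent (r ≫ B.P.map (β_ X Y).hom) := by
  unfold AffineBilax.Independent at hr ⊢
  calc (r ≫ B.P.map (β_ X Y).hom) ≫ B.delta Y X ≫ B.nabla Y X
      = r ≫ (B.P.map (β_ X Y).hom ≫ B.delta Y X) ≫ B.nabla Y X := by
        simp only [Category.assoc]
    _ = r ≫ (B.delta X Y ≫ (β_ (B.P.obj X) (B.P.obj Y)).hom) ≫ B.nabla Y X := by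
        rw [delta_braided]
    _ = r ≫ B.delta X Y ≫ B.nabla X Y ≫ B.P.map (β_ X Y).hom := by
        rw [nabla_braided]; simp only [Category.assoc]
    _ = r ≫ B.P.map (β_ X Y).hom := by
        rw [← Category.assoc] at hr
        rw [reassoc_of% hr]
end

section
/- Let X and Y be metric spaces equipped with their Borel σ-algebras, and let r, r' be probability measures on X × Y such that every function X × Y → ℝ that is short for the sum metric is integrable with respect to r and to r' (finite first moment for the sum metric). Then d_K(r_X, r'_X) + d_K(r_Y, r'_Y) ≤ sup over all functions f : X × Y → ℝ short for the sum metric of (∫ f dr − ∫ f dr'), where r_X, r_Y denote the marginals of r and d_K the Kantorovich distance. In other words, the map sending a joint to its pair of marginals is short. -/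
open MeasureTheory

/-- The Kantorovich distance between two measures: the supremum over 1-Lipschitz
functions `f : X → ℝ` of `∫ f dp − ∫ f dq`. -/
noncomputable def kantorovichDist {X : Type*} [MetricSpace X] [MeasurableSpace X]
    (p q : Measure X) : ℝ :=
  sSup {t | ∃ f : X → ℝ, LipschitzWith 1 f ∧ t = (∫ x, f x ∂p) - ∫ x, f x ∂q}

/-- Taking marginals is short: the sum of the Kantorovich distances between the
marginals of two joints `r, r'` is at most the supremum, over functions on `X × Y`
that are short for the sum metric, of `∫ f dr − ∫ f dr'`. -/
theorem marginals_short
    {X Y : Type*} [MetricSpace X] [MetricSpace Y]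
    [MeasurableSpace X] [BorelSpace X] [MeasurableSpace Y] [BorelSpace Y]
    (r r' : Measure (X × Y)) [IsProbabilityMeasure r] [IsProbabilityMeasure r']
    (hr : ∀ f : X × Y → ℝ,
      (∀ (x x' : X) (y y' : Y), |f (x, y) - f (x', y')| ≤ dist x x' + dist y y') →
      Integrable f r)
    (hr' : ∀ f : X × Y → ℝ,
      (∀ (x x' : X) (y y' : Y), |f (x, y) - f (x', y')| ≤ dist x x' + dist y y') →
      Integrable f r') :
    kantorovichDist (r.map Prod.fst) (r'.map Prod.fst)
        + kantorovichDist (r.map Prod.snd) (r'.map Prod.snd)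
      ≤ sSup {t | ∃ f : X × Y → ℝ,
          (∀ (x x' : X) (y y' : Y), |f (x, y) - f (x', y')| ≤ dist x x' + dist y y') ∧
          t = (∫ z, f z ∂r) - ∫ z, f z ∂r'} := by
  classical
  -- X × Y is nonempty
  obtain ⟨z0⟩ : Nonempty (X × Y) := by
    by_contra h
    rw [not_nonempty_iff] at h
    have h1 : r Set.univ = 1 := measure_univ
    rw [Set.univ_eq_empty_iff.mpr h, measure_empty] at h1
    exact zero_ne_one h1
  set S := {t | ∃ f : X × Y → ℝ,
      (∀ (x x' : X) (y y' : Y), |f (x, y) - f (x', y')| ≤ dist x x' + dist y y') ∧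
      t = (∫ z, f z ∂r) - ∫ z, f z ∂r'} with hS
  set A := {t | ∃ f : X → ℝ, LipschitzWith 1 f ∧
      t = (∫ x, f x ∂(r.map Prod.fst)) - ∫ x, f x ∂(r'.map Prod.fst)} with hA
  set B := {t | ∃ f : Y → ℝ, LipschitzWith 1 f ∧
      t = (∫ x, f x ∂(r.map Prod.snd)) - ∫ x, f x ∂(r'.map Prod.snd)} with hB
  -- the reference short function
  set D : X × Y → ℝ := fun z => dist z.1 z0.1 + dist z.2 z0.2 with hD
  have hDshort : ∀ (x x' : X) (y y' : Y), |D (x, y) - D (x', y')| ≤ dist x x' + dist y y' := by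
    intro x x' y y'
    have h1 : |dist x z0.1 - dist x' z0.1| ≤ dist x x' := abs_dist_sub_le _ _ _
    have h2 : |dist y z0.2 - dist y' z0.2| ≤ dist y y' := abs_dist_sub_le _ _ _
    calc |D (x, y) - D (x', y')|
        = |(dist x z0.1 - dist x' z0.1) + (dist y z0.2 - dist y' z0.2)| := by
          simp only [hD]; ring_nf
      _ ≤ |dist x z0.1 - dist x' z0.1| + |dist y z0.2 - dist y' z0.2| := abs_add_le _ _
      _ ≤ dist x x' + dist y y' := add_le_add h1 h2
  have hDr : Integrable D r := hr D hDshort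
  have hDr' : Integrable D r' := hr' D hDshort
  -- S is bounded above
  have hSbdd : BddAbove S := by
    refine ⟨(∫ z, D z ∂r) + ∫ z, D z ∂r', ?_⟩
    rintro t ⟨f, hf, rfl⟩
    have hfr : Integrable f r := hr f hf
    have hfr' : Integrable f r' := hr' f hf
    have hle : ∀ z : X × Y, f z - f z0 ≤ D z := by
      intro z
      have := hf z.1 z0.1 z.2 z0.2
      have h2 := (abs_le.mp this).2
      simpa [hD] using h2
    have hge : ∀ z : X × Y, f z0 - f z ≤ D z := by
      intro z
      have := hf z.1 z0.1 z.2 z0.2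
      have h2 := (abs_le.mp this).1
      simp [hD] at *
      linarith
    have i1 : (∫ z, f z ∂r) - f z0 ≤ ∫ z, D z ∂r := by
      have : ∫ z, (f z - f z0) ∂r ≤ ∫ z, D z ∂r :=
        integral_mono (hfr.sub (integrable_const _)) hDr hle
      rwa [integral_sub hfr (integrable_const _), integral_const, probReal_univ,
        one_smul] at this
    have i2 : f z0 - (∫ z, f z ∂r') ≤ ∫ z, D z ∂r' := by
      have : ∫ z, (f z0 - f z) ∂r' ≤ ∫ z, D z ∂r' :=
        integral_mono ((integrable_const _).sub hfr') hDr' hge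
      rwa [integral_sub (integrable_const _) hfr', integral_const, probReal_univ,
        one_smul] at this
    linarith
  -- 0 ∈ A, 0 ∈ B
  have hzero : LipschitzWith 1 (fun _ : X => (0:ℝ)) := by
    intro a b; simp
  have hzeroY : LipschitzWith 1 (fun _ : Y => (0:ℝ)) := by
    intro a b; simp
  have hA0 : (0:ℝ) ∈ A := ⟨fun _ => 0, hzero, by simp⟩
  have hB0 : (0:ℝ) ∈ B := ⟨fun _ => 0, hzeroY, by simp⟩
  -- key: a ∈ A, b ∈ B → a + b ∈ S
  have key : ∀ a ∈ A, ∀ b ∈ B, a + b ∈ S := by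
    rintro a ⟨f, hf, rfl⟩ b ⟨g, hg, rfl⟩
    refine ⟨fun z => f z.1 + g z.2, ?_, ?_⟩
    · intro x x' y y'
      have h1 : |f x - f x'| ≤ dist x x' := by
        have := hf.dist_le_mul x x'
        rwa [Real.dist_eq, NNReal.coe_one, one_mul] at this
      have h2 : |g y - g y'| ≤ dist y y' := by
        have := hg.dist_le_mul y y'
        rwa [Real.dist_eq, NNReal.coe_one, one_mul] at this
      calc |f x + g y - (f x' + g y')| = |(f x - f x') + (g y - g y')| := by ring_nf
        _ ≤ |f x - f x'| + |g y - g y'| := abs_add_le _ _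
        _ ≤ dist x x' + dist y y' := add_le_add h1 h2
    · have hfshort : ∀ (x x' : X) (y y' : Y),
          |(fun z : X × Y => f z.1) (x, y) - (fun z : X × Y => f z.1) (x', y')|
            ≤ dist x x' + dist y y' := by
        intro x x' y y'
        have h1 : |f x - f x'| ≤ dist x x' := by
          have := hf.dist_le_mul x x'
          rwa [Real.dist_eq, NNReal.coe_one, one_mul] at this
        exact h1.trans (le_add_of_nonneg_right dist_nonneg)
      have hgshort : ∀ (x x' : X) (y y' : Y),
          |(fun z : X × Y => g z.2) (x, y) - (fun z : X × Y => g z.2) (x', y')|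
            ≤ dist x x' + dist y y' := by
        intro x x' y y'
        have h2 : |g y - g y'| ≤ dist y y' := by
          have := hg.dist_le_mul y y'
          rwa [Real.dist_eq, NNReal.coe_one, one_mul] at this
        exact h2.trans (le_add_of_nonneg_left dist_nonneg)
      have i1 : Integrable (fun z : X × Y => f z.1) r := hr _ hfshort
      have i2 : Integrable (fun z : X × Y => g z.2) r := hr _ hgshort
      have i1' : Integrable (fun z : X × Y => f z.1) r' := hr' _ hfshort
      have i2' : Integrable (fun z : X × Y => g z.2) r' := hr' _ hgshort
      have mf : ∀ (μ : Measure (X × Y)),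
          ∫ x, f x ∂(μ.map Prod.fst) = ∫ z : X × Y, f z.1 ∂μ := by
        intro μ
        rw [integral_map measurable_fst.aemeasurable hf.continuous.aestronglyMeasurable]
      have mg : ∀ (μ : Measure (X × Y)),
          ∫ y, g y ∂(μ.map Prod.snd) = ∫ z : X × Y, g z.2 ∂μ := by
        intro μ
        rw [integral_map measurable_snd.aemeasurable hg.continuous.aestronglyMeasurable]
      rw [mf r, mf r', mg r, mg r',
        integral_add i1 i2, integral_add i1' i2']
      ring
  have hAne : A.Nonempty := ⟨0, hA0⟩
  have hBne : B.Nonempty := ⟨0, hB0⟩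
  have h1 : ∀ b ∈ B, sSup A ≤ sSup S - b := by
    intro b hb
    refine csSup_le hAne fun a ha => ?_
    have := le_csSup hSbdd (key a ha b hb)
    linarith
  have h2 : sSup B ≤ sSup S - sSup A := by
    refine csSup_le hBne fun b hb => ?_
    have := h1 b hb
    linarith
  have : kantorovichDist (r.map Prod.fst) (r'.map Prod.fst) = sSup A := rfl
  have : kantorovichDist (r.map Prod.snd) (r'.map Prod.snd) = sSup B := rfl
  show sSup A + sSup B ≤ sSup S
  linarith
end

section
/- Let X and Y be measurable spaces, let M be a probability measure on the space of measures on X such that M-almost every measure is a probability measure, and let N be a probability measure on the space of measures on Y such that N-almost every measure is a probability measure. Then the product of the averages equals the average of the products: (join M) × (join N) = join of the pushforward of the product measure M × N under the map (p, q) ↦ p × q, where join denotes the Giry-monad multiplication (join M = the measure A ↦ ∫ p(A) dM(p)) and × denotes the product of measures. -/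
open MeasureTheory Set

open scoped ENNReal

section Aux

variable {X Y : Type*} [MeasurableSpace X] [MeasurableSpace Y]

/-- The set of pairs of probability measures. -/
def probPairs (X Y : Type*) [MeasurableSpace X] [MeasurableSpace Y] :
    Set (Measure X × Measure Y) :=
  {pq | pq.1 Set.univ = 1 ∧ pq.2 Set.univ = 1}

lemma measurableSet_probPairs : MeasurableSet (probPairs X Y) := by
  have h1 : MeasurableSet {pq : Measure X × Measure Y | pq.1 Set.univ = 1} :=
    ((Measure.measurable_coe MeasurableSet.univ).comp measurable_fst)
      (measurableSet_singleton 1)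
  have h2 : MeasurableSet {pq : Measure X × Measure Y | pq.2 Set.univ = 1} :=
    ((Measure.measurable_coe MeasurableSet.univ).comp measurable_snd)
      (measurableSet_singleton 1)
  exact h1.inter h2

/-- On the subtype of pairs of probability measures, the product-measure map is
measurable. -/
lemma measurable_prod_of_prob :
    Measurable fun z : probPairs X Y => (z : Measure X × Measure Y).1.prod
      (z : Measure X × Measure Y).2 := by
  apply Measure.measurable_of_measurable_coe
  intro s hs
  have hrw : ∀ z : probPairs X Y,
      ((z : Measure X × Measure Y).1.prod (z : Measure X × Measure Y).2) s
        = ∫⁻ x, (z : Measure X × Measure Y).2 (Prod.mk x ⁻¹' s)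
            ∂(z : Measure X × Measure Y).1 := by
    intro z
    haveI : IsProbabilityMeasure (z : Measure X × Measure Y).2 := ⟨z.2.2⟩
    exact Measure.prod_apply hs
  simp_rw [hrw]
  -- the outer kernel: `z ↦ z.1`
  let κ : ProbabilityTheory.Kernel (probPairs X Y) X :=
    ⟨fun z => (z : Measure X × Measure Y).1, measurable_fst.comp measurable_subtype_coe⟩
  haveI : ProbabilityTheory.IsMarkovKernel κ := ⟨fun z => ⟨z.2.1⟩⟩
  -- the inner kernel: `(z, x) ↦ z.2`
  let η : ProbabilityTheory.Kernel (probPairs X Y × X) Y :=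
    ⟨fun w => (w.1 : Measure X × Measure Y).2,
      (measurable_snd.comp measurable_subtype_coe).comp measurable_fst⟩
  haveI : ProbabilityTheory.IsMarkovKernel η := ⟨fun w => ⟨w.1.2.2⟩⟩
  have ht : MeasurableSet {w : (probPairs X Y × X) × Y | (w.1.2, w.2) ∈ s} :=
    (measurable_fst.snd.prodMk measurable_snd) hs
  have hη : Measurable fun w : probPairs X Y × X =>
      η w (Prod.mk w ⁻¹' {w : (probPairs X Y × X) × Y | (w.1.2, w.2) ∈ s}) :=
    ProbabilityTheory.Kernel.measurable_kernel_prodMk_left ht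
  have hf : Measurable (Function.uncurry fun (z : probPairs X Y) (x : X) =>
      (z : Measure X × Measure Y).2 (Prod.mk x ⁻¹' s)) := by
    convert hη using 1
    rfl
  exact hf.lintegral_kernel_prod_right (κ := κ)

end Aux

/-- The product of the averages is the average of the products: for probability
measures `M` and `N` on spaces of measures (almost all of whose members are
probability measures), `(join M) × (join N)` equals the join of the pushforward of
`M × N` under the product-measure map `(p, q) ↦ p × q`. -/
theorem join_prod_eq_prod_join
    {X Y : Type*} [MeasurableSpace X] [MeasurableSpace Y]
    (M : Measure (Measure X)) [IsProbabilityMeasure M]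
    (hM : ∀ᵐ p ∂M, IsProbabilityMeasure p)
    (N : Measure (Measure Y)) [IsProbabilityMeasure N]
    (hN : ∀ᵐ q ∂N, IsProbabilityMeasure q) :
    M.join.prod N.join
      = ((M.prod N).map (fun pq : Measure X × Measure Y => pq.1.prod pq.2)).join := by
  classical
  -- the product measure map is a.e. equal to a measurable function
  set S := probPairs X Y with hS
  -- almost every pair lies in `S`
  have hMN : ∀ᵐ pq ∂M.prod N, pq ∈ S := by
    have hA : M {p : Measure X | p Set.univ = 1} = 1 := by
      have h : {p : Measure X | p Set.univ = 1} =ᵐ[M] Set.univ := by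
        filter_upwards [hM] with p hp
        simp only [eq_iff_iff]
        exact iff_of_true hp.measure_univ trivial
      rw [measure_congr h, measure_univ]
    have hB : N {q : Measure Y | q Set.univ = 1} = 1 := by
      have h : {q : Measure Y | q Set.univ = 1} =ᵐ[N] Set.univ := by
        filter_upwards [hN] with q hq
        simp only [eq_iff_iff]
        exact iff_of_true hq.measure_univ trivial
      rw [measure_congr h, measure_univ]
    have hAmeas : MeasurableSet {p : Measure X | p Set.univ = 1} :=
      Measure.measurable_coe MeasurableSet.univ (measurableSet_singleton 1)
    have hBmeas : MeasurableSet {q : Measure Y | q Set.univ = 1} :=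
      Measure.measurable_coe MeasurableSet.univ (measurableSet_singleton 1)
    have hprod : (M.prod N) ({p : Measure X | p Set.univ = 1}
        ×ˢ {q : Measure Y | q Set.univ = 1}) = 1 := by
      rw [Measure.prod_prod, hA, hB, one_mul]
    have hsub : ({p : Measure X | p Set.univ = 1}
        ×ˢ {q : Measure Y | q Set.univ = 1}) ⊆ S := by
      rintro ⟨p, q⟩ ⟨hp, hq⟩
      exact ⟨hp, hq⟩
    have : (M.prod N) Sᶜ = 0 := by
      have h1 : (M.prod N) (({p : Measure X | p Set.univ = 1}
          ×ˢ {q : Measure Y | q Set.univ = 1})ᶜ) = 0 := by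
        rw [measure_compl (hAmeas.prod hBmeas) (measure_ne_top _ _), hprod,
          measure_univ, tsub_self]
      exact measure_mono_null (Set.compl_subset_compl.mpr hsub) h1
    exact this
  -- a measurable representative of the product-measure map
  set g : Measure X × Measure Y → Measure (X × Y) :=
    fun pq => if h : pq ∈ S then
      ((⟨pq, h⟩ : S) : Measure X × Measure Y).1.prod
        ((⟨pq, h⟩ : S) : Measure X × Measure Y).2 else 0 with hg
  have hgmeas : Measurable g :=
    Measurable.dite measurable_prod_of_prob measurable_const measurableSet_probPairs
  have haef : (fun pq : Measure X × Measure Y => pq.1.prod pq.2) =ᵐ[M.prod N] g := by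
    filter_upwards [hMN] with pq hpq
    simp [hg, hpq]
  have haem : AEMeasurable (fun pq : Measure X × Measure Y => pq.1.prod pq.2) (M.prod N) :=
    ⟨g, hgmeas, haef⟩
  -- the averages are probability measures, hence sigma-finite
  haveI : IsProbabilityMeasure M.join := by
    constructor
    rw [Measure.join_apply MeasurableSet.univ]
    calc ∫⁻ p, p Set.univ ∂M = ∫⁻ _, 1 ∂M := by
          apply lintegral_congr_ae
          filter_upwards [hM] with p hp
          exact hp.measure_univ
      _ = 1 := by simp
  haveI : IsProbabilityMeasure N.join := by
    constructor
    rw [Measure.join_apply MeasurableSet.univ]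
    calc ∫⁻ q, q Set.univ ∂N = ∫⁻ _, 1 ∂N := by
          apply lintegral_congr_ae
          filter_upwards [hN] with q hq
          exact hq.measure_univ
      _ = 1 := by simp
  -- it suffices to check equality on rectangles
  refine Measure.prod_eq fun A B hA hB => ?_
  rw [Measure.join_apply (hA.prod hB)]
  rw [lintegral_map' (Measure.measurable_coe (hA.prod hB)).aemeasurable haem]
  have : ∫⁻ pq, (pq.1.prod pq.2) (A ×ˢ B) ∂(M.prod N)
      = ∫⁻ pq : Measure X × Measure Y, pq.1 A * pq.2 B ∂(M.prod N) := by
    apply lintegral_congr_ae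
    filter_upwards [hMN] with pq hpq
    haveI : IsProbabilityMeasure pq.2 := ⟨hpq.2⟩
    exact Measure.prod_prod A B
  rw [this,
    lintegral_prod_mul ((Measure.measurable_coe hA).aemeasurable)
      ((Measure.measurable_coe hB).aemeasurable),
    Measure.join_apply hA, Measure.join_apply hB]
end
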